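/- Let M be a compact smooth manifold and E a smooth complex vector bundle of finite rank over M. Then there exist a natural number n and an injective C^∞(M,ℂ)-module homomorphism from Γ^∞(E) into the free module (C^∞(M,ℂ))^n; that is, the module of sections Γ^∞(E) is of finite type. -/

import Mathlib

open Bundle Manifold
open scoped TensorProduct

local notation "∞" => (⊤ : ℕ∞)

noncomputable section

/-- Complex multiplication and addition are smooth over `ℝ`, so that the complex-valued smooth
functions on a real manifold form a (comm)ring. -/
instance : ContMDiffRing 𝓘(ℝ, ℂ) ∞ ℂ where
  contMDiff_add := by
    rw [← modelWithCornersSelf_prod, chartedSpaceSelf_prod]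
    exact (contDiff_add (𝕜 := ℝ) (F := ℂ) (n := ∞)).contMDiff
  contMDiff_mul := by
    rw [← modelWithCornersSelf_prod, chartedSpaceSelf_prod]
    exact (contDiff_mul (𝕜 := ℝ) (𝔸 := ℂ) (n := ∞)).contMDiff

variable {EM : Type*} [NormedAddCommGroup EM] [NormedSpace ℝ EM] [FiniteDimensional ℝ EM]
  {HM : Type*} [TopologicalSpace HM] {IM : ModelWithCorners ℝ EM HM}
  {M : Type*} [TopologicalSpace M] [ChartedSpace HM M] [IsManifold IM ∞ M]
  [T2Space M] [SecondCountableTopology M] [CompactSpace M]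

/-- The constant functions make the smooth complex-valued functions a `ℂ`-algebra. -/
instance : Algebra ℂ C^∞⟮IM, M; 𝓘(ℝ, ℂ), ℂ⟯ :=
  RingHom.toAlgebra
    { toFun := fun c => ⟨fun _ => c, contMDiff_const⟩
      map_one' := rfl
      map_mul' := fun _ _ => rfl
      map_zero' := rfl
      map_add' := fun _ _ => rfl }

variable {F : Type*} [NormedAddCommGroup F] [NormedSpace ℂ F] [FiniteDimensional ℂ F]
  {V : M → Type*} [TopologicalSpace (TotalSpace F V)]
  [∀ x, AddCommGroup (V x)] [∀ x, Module ℂ (V x)] [∀ x, TopologicalSpace (V x)]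
  [FiberBundle F V] [VectorBundle ℂ F V] [VectorBundle ℝ F V] [ContMDiffVectorBundle ∞ F V IM]

/-- Pointwise scalar multiplication of a smooth section by a smooth function. -/
instance ContMDiffSection.instSMulSmoothMap :
    SMul C^∞⟮IM, M; 𝓘(ℝ, ℂ), ℂ⟯ Cₛ^∞⟮IM; F, V⟯ := by
  refine ⟨fun f s => ⟨fun x => f x • s x, ?_⟩⟩
  intro x₀
  have hs := s.contMDiff x₀
  have hf : ContMDiffAt IM 𝓘(ℝ, ℂ) ∞ f x₀ := f.contMDiff x₀
  rw [contMDiffAt_section] at hs ⊢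
  set e := trivializationAt F V x₀
  have h1 : ContMDiffAt IM 𝓘(ℝ, F →L[ℝ] F) ∞
      (fun x => (ContinuousLinearMap.lsmul ℝ ℂ (f x) : F →L[ℝ] F)) x₀ :=
    ContDiff.comp_contMDiffAt
      (g := ⇑(ContinuousLinearMap.lsmul ℝ ℂ : ℂ →L[ℝ] F →L[ℝ] F))
      (ContinuousLinearMap.contDiff _) hf
  refine (h1.clm_apply hs).congr_of_eventuallyEq ?_
  refine Filter.eventually_of_mem
    (e.open_baseSet.mem_nhds <| mem_baseSet_trivializationAt F V x₀) ?_
  intro x hx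
  simp only [ContinuousLinearMap.lsmul_apply]
  exact (e.linear ℂ hx).2 (f x) (s x)

set_option linter.unusedSectionVars false in
@[simp]
theorem ContMDiffSection.coe_smul_smoothMap (f : C^∞⟮IM, M; 𝓘(ℝ, ℂ), ℂ⟯)
    (s : Cₛ^∞⟮IM; F, V⟯) (x : M) : (f • s) x = f x • s x :=
  rfl

/-- The smooth sections of a smooth complex vector bundle form a module over the algebra of
smooth complex-valued functions on the base. -/
instance ContMDiffSection.instModuleSmoothMap :
    Module C^∞⟮IM, M; 𝓘(ℝ, ℂ), ℂ⟯ Cₛ^∞⟮IM; F, V⟯ where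
  one_smul s := ContMDiffSection.ext fun x => one_smul ℂ (s x)
  mul_smul f g s := ContMDiffSection.ext fun x => mul_smul (f x) (g x) (s x)
  smul_zero f := ContMDiffSection.ext fun x => smul_zero (f x)
  smul_add f s t := ContMDiffSection.ext fun x => smul_add (f x) (s x) (t x)
  add_smul f g s := ContMDiffSection.ext fun x => add_smul (f x) (g x) (s x)
  zero_smul s := ContMDiffSection.ext fun x => zero_smul ℂ (s x)

instance ContMDiffSection.instModuleComplex : Module ℂ Cₛ^∞⟮IM; F, V⟯ :=
  Module.compHom _ (algebraMap ℂ C^∞⟮IM, M; 𝓘(ℝ, ℂ), ℂ⟯)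

instance ContMDiffSection.instIsScalarTowerComplex :
    IsScalarTower ℂ C^∞⟮IM, M; 𝓘(ℝ, ℂ), ℂ⟯ Cₛ^∞⟮IM; F, V⟯ :=
  ⟨fun c f s => by
    show (c • f) • s = algebraMap ℂ C^∞⟮IM, M; 𝓘(ℝ, ℂ), ℂ⟯ c • f • s
    rw [Algebra.smul_def, mul_smul]⟩

/-!
Cover `M` by finitely many trivializing open sets `Uᵢ` and take a smooth partition of unity `ρᵢ`
subordinate to it. In the trivialization over `Uᵢ` a section has coordinates in `ℂᵈ`; multiplied
by `ρᵢ` they become smooth functions on all of `M`, depending `C^∞(M, ℂ)`-linearly on the section.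
The resulting map into `C^∞(M, ℂ)^(k d)` is injective because at each point some `ρᵢ` is nonzero,
and there the trivialization is an isomorphism on the fiber.
-/

open Set

namespace ContMDiffSection

section CutoffCoord

omit [FiniteDimensional ℝ EM] [IsManifold IM ∞ M] [T2Space M] [SecondCountableTopology M]
  [CompactSpace M] [FiniteDimensional ℂ F]

variable (e : Trivialization F (π F V)) [MemTrivializationAtlas e]

theorem contMDiffAt_linearMapAt (s : Cₛ^∞⟮IM; F, V⟯) {x₀ : M} (hx₀ : x₀ ∈ e.baseSet) :
    ContMDiffAt IM 𝓘(ℝ, F) ∞ (fun x => e.linearMapAt ℂ x (s x)) x₀ := by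
  refine ((e.contMDiffAt_section_iff hx₀).1 (s.contMDiff x₀)).congr_of_eventuallyEq ?_
  filter_upwards [e.open_baseSet.mem_nhds hx₀] with x hx
  rw [e.coe_linearMapAt_of_mem hx]

/-- `e.linearMapAt` is zero off `e.baseSet`; the cutoff `ρ` is what makes this extension of the
`ℓ`-coordinate smooth. -/
def cutoffCoord (ρ : C^∞⟮IM, M; 𝓘(ℝ), ℝ⟯) (hρ : tsupport ρ ⊆ e.baseSet) (ℓ : F →L[ℂ] ℂ) :
    Cₛ^∞⟮IM; F, V⟯ →ₗ[C^∞⟮IM, M; 𝓘(ℝ, ℂ), ℂ⟯] C^∞⟮IM, M; 𝓘(ℝ, ℂ), ℂ⟯ where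
  toFun s := ⟨fun x => ρ x • ℓ (e.linearMapAt ℂ x (s x)), contMDiff_of_tsupport fun x hx =>
    ρ.contMDiff.contMDiffAt.smul <| (ℓ.restrictScalars ℝ).contMDiff.contMDiffAt.comp x <|
      contMDiffAt_linearMapAt e s <| hρ <| tsupport_smul_subset_left _ _ hx⟩
  map_add' s t := by
    ext x
    simp only [coe_add, Pi.add_apply, map_add, smul_add]
    rfl
  map_smul' c s := by
    ext x
    change ρ x • ℓ (e.linearMapAt ℂ x (c x • s x)) = c x * (ρ x • ℓ (e.linearMapAt ℂ x (s x)))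
    rw [map_smul, map_smul, smul_eq_mul, mul_smul_comm]

theorem eq_zero_of_cutoffCoord_eq_zero {ρ : C^∞⟮IM, M; 𝓘(ℝ), ℝ⟯} (hρ : tsupport ρ ⊆ e.baseSet)
    {κ : Type*} {ℓ : κ → F →L[ℂ] ℂ} (hℓ : ∀ v, (∀ j, ℓ j v = 0) → v = 0)
    {s : Cₛ^∞⟮IM; F, V⟯} (hs : ∀ j, cutoffCoord e ρ hρ (ℓ j) s = 0) {x : M} (hx : ρ x ≠ 0) :
    s x = 0 := by
  have hxe : x ∈ e.baseSet := hρ (subset_tsupport _ hx)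
  have hcoord : e.linearMapAt ℂ x (s x) = 0 := hℓ _ fun j =>
    (smul_eq_zero.1 (congrArg (· x) (hs j))).resolve_left hx
  rwa [e.linearMapAt_def_of_mem hxe, LinearEquiv.coe_coe, LinearEquiv.map_eq_zero_iff] at hcoord

end CutoffCoord

omit [SecondCountableTopology M] [CompactSpace M] in
theorem exists_injective_pi_of_iUnion_baseSet [SigmaCompactSpace M] {ι : Type*} (t : ι → M)
    (ht : ⋃ i, (trivializationAt F V (t i)).baseSet = univ) :
    ∃ φ : Cₛ^∞⟮IM; F, V⟯ →ₗ[C^∞⟮IM, M; 𝓘(ℝ, ℂ), ℂ⟯]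
        (ι × Fin (Module.finrank ℂ F) → C^∞⟮IM, M; 𝓘(ℝ, ℂ), ℂ⟯), Function.Injective φ := by
  obtain ⟨ρ, hρ⟩ := SmoothPartitionOfUnity.exists_isSubordinate IM isClosed_univ
    (fun i => (trivializationAt F V (t i)).baseSet)
    (fun i => (trivializationAt F V (t i)).open_baseSet) ht.ge
  let b := Module.finBasis ℂ F
  let ℓ : Fin (Module.finrank ℂ F) → F →L[ℂ] ℂ := fun j =>
    LinearMap.toContinuousLinearMap (b.coord j)
  refine ⟨LinearMap.pi fun p => cutoffCoord _ (ρ p.1) (hρ p.1) (ℓ p.2), ?_⟩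
  rw [← LinearMap.ker_eq_bot, LinearMap.ker_eq_bot']
  intro s hs
  ext x
  obtain ⟨i, hi⟩ := ρ.exists_pos_of_mem (mem_univ x)
  exact eq_zero_of_cutoffCoord_eq_zero _ (hρ i) (fun v => b.forall_coord_eq_zero_iff.1)
    (fun j => congrFun hs (i, j)) hi.ne'

end ContMDiffSection

theorem sections_finite_type :
    ∃ (n : ℕ) (φ : Cₛ^∞⟮IM; F, V⟯ →ₗ[C^∞⟮IM, M; 𝓘(ℝ, ℂ), ℂ⟯]
        (Fin n → C^∞⟮IM, M; 𝓘(ℝ, ℂ), ℂ⟯)), Function.Injective φ := by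
  obtain ⟨T, hT⟩ := isCompact_univ.elim_finite_subcover
    (fun x : M => (trivializationAt F V x).baseSet) (fun x => (trivializationAt F V x).open_baseSet)
    fun x _ => mem_iUnion.2 ⟨x, mem_baseSet_trivializationAt F V x⟩
  obtain ⟨φ, hφ⟩ := ContMDiffSection.exists_injective_pi_of_iUnion_baseSet (IM := IM) ((↑) : T → M)
    (by simpa [eq_univ_iff_forall] using hT)
  let reindex := LinearEquiv.funCongrLeft C^∞⟮IM, M; 𝓘(ℝ, ℂ), ℂ⟯ C^∞⟮IM, M; 𝓘(ℝ, ℂ), ℂ⟯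
    (Fintype.equivFin (T × Fin (Module.finrank ℂ F))).symm
  exact ⟨_, reindex.toLinearMap ∘ₗ φ, reindex.injective.comp hφ⟩

end
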